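/- Let L* be an irreducible symmetric positive definite matrix (its determinantal graph is connected). Then the quadratic form H ↦ Var[Tr((L*_Z)^{-1}H_Z)] on symmetric matrices H is positive definite: it vanishes only for H = 0. -/

import Mathlib

open Matrix BigOperators

noncomputable def subm {N : ℕ} (L : Matrix (Fin N) (Fin N) ℝ) (J : Finset (Fin N)) :
    Matrix J J ℝ :=
  L.submatrix (fun i => (i : Fin N)) (fun j => (j : Fin N))

noncomputable def pstar {N : ℕ} (Lstar : Matrix (Fin N) (Fin N) ℝ)
    (J : Finset (Fin N)) : ℝ :=
  (subm Lstar J).det / (1 + Lstar).det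

noncomputable def traceRV {N : ℕ} (Lstar H : Matrix (Fin N) (Fin N) ℝ)
    (J : Finset (Fin N)) : ℝ :=
  ((subm Lstar J)⁻¹ * subm H J).trace

/-- Variance of `Tr((L*_Z)⁻¹ H_Z)` under `Z ~ DPP(L*)`. -/
noncomputable def varTrace {N : ℕ} (Lstar H : Matrix (Fin N) (Fin N) ℝ) : ℝ :=
  ∑ J : Finset (Fin N), pstar Lstar J * (traceRV Lstar H J) ^ 2
    - (∑ J : Finset (Fin N), pstar Lstar J * traceRV Lstar H J) ^ 2

lemma posdef_submatrix {N : ℕ} {m : Type*} [Fintype m] [DecidableEq m]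
    {L : Matrix (Fin N) (Fin N) ℝ} (hL : L.PosDef) (f : m → Fin N)
    (hf : Function.Injective f) : (L.submatrix f f).PosDef := by
  refine Matrix.PosDef.of_dotProduct_mulVec_pos (hL.1.submatrix f) fun v hv => ?_
  classical
  set y : Fin N → ℝ := fun i => if h : ∃ a, f a = i then v h.choose else 0 with hy
  have hyf : ∀ a, y (f a) = v a := by
    intro a
    have h : ∃ b, f b = f a := ⟨a, rfl⟩
    simp only [hy, dif_pos h]
    exact congrArg v (hf h.choose_spec)
  have hy0 : y ≠ 0 := by
    intro h
    apply hv
    ext a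
    have := congrFun h (f a)
    simpa [hyf a] using this
  have key : star v ⬝ᵥ (L.submatrix f f).mulVec v = star y ⬝ᵥ L.mulVec y := by
    have hsupp : ∀ i, (¬ ∃ a, f a = i) → y i = 0 := by
      intro i hi; simp [hy, dif_neg hi]
    -- rewrite RHS as sum over image
    rw [dotProduct, dotProduct]
    rw [← Finset.sum_subset (Finset.subset_univ (Finset.univ.image f))]
    · rw [Finset.sum_image (fun a _ b _ h => hf h)]
      refine Finset.sum_congr rfl fun a _ => ?_
      simp only [star_trivial, hyf, mulVec, dotProduct, submatrix_apply]
      congr 1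
      rw [← Finset.sum_subset (Finset.subset_univ (Finset.univ.image f))]
      · rw [Finset.sum_image (fun a _ b _ h => hf h)]
        exact Finset.sum_congr rfl fun b _ => by rw [hyf]
      · intro i _ hi
        have : y i = 0 := hsupp i (by simpa [Finset.mem_image] using hi)
        simp [this]
    · intro i _ hi
      have : y i = 0 := hsupp i (by simpa [Finset.mem_image] using hi)
      simp [this]
  rw [key]
  exact hL.dotProduct_mulVec_pos hy0

lemma det_piecewise {N : ℕ} (L : Matrix (Fin N) (Fin N) ℝ) (s : Finset (Fin N)) :
    (Matrix.detRowAlternating (s.piecewise (fun i => L i) (fun i => (1 : Matrix (Fin N) (Fin N) ℝ) i)) : ℝ)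
      = (subm L s).det := by
  classical
  set M : Matrix (Fin N) (Fin N) ℝ :=
    Matrix.of (s.piecewise (fun i => L i) (fun i => (1 : Matrix (Fin N) (Fin N) ℝ) i)) with hM
  have h1 : (Matrix.detRowAlternating (s.piecewise (fun i => L i) (fun i => (1 : Matrix (Fin N) (Fin N) ℝ) i)) : ℝ) = M.det := rfl
  rw [h1]
  set e : {x // x ∈ s} ⊕ {x // ¬ x ∈ s} ≃ Fin N := Equiv.sumCompl (· ∈ s) with he
  rw [← Matrix.det_submatrix_equiv_self e M]
  have h2 : M.submatrix e e =
      Matrix.fromBlocks (subm L s) (fun (i : {x // x ∈ s}) (j : {x // ¬ x ∈ s}) => L i j) 0 1 := by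
    ext i j
    cases i with
    | inl i =>
      cases j with
      | inl j =>
        simp only [submatrix_apply, he, Equiv.sumCompl_apply_inl]
        simp [hM, Finset.piecewise_eq_of_mem _ _ _ i.2, subm]
        rfl
      | inr j =>
        simp only [submatrix_apply, he, Equiv.sumCompl_apply_inl, Equiv.sumCompl_apply_inr]
        simp [hM, Finset.piecewise_eq_of_mem _ _ _ i.2]
        rfl
    | inr i =>
      cases j with
      | inl j =>
        simp only [submatrix_apply, he, Equiv.sumCompl_apply_inl, Equiv.sumCompl_apply_inr]
        have : (i : Fin N) ≠ (j : Fin N) := by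
          intro h; exact i.2 (h ▸ j.2)
        simp [hM, Finset.piecewise_eq_of_notMem _ _ _ i.2, Matrix.one_apply, this]
        rfl
      | inr j =>
        simp only [submatrix_apply, he, Equiv.sumCompl_apply_inr]
        simp [hM, Finset.piecewise_eq_of_notMem _ _ _ i.2, Matrix.one_apply,
          Matrix.fromBlocks, Subtype.val_inj]
  rw [h2]
  exact (Matrix.det_fromBlocks_zero₂₁ _ _ _).trans (by rw [Matrix.det_one, mul_one])

lemma sum_minors {N : ℕ} (L : Matrix (Fin N) (Fin N) ℝ) :
    ∑ J : Finset (Fin N), (subm L J).det = (1 + L).det := by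
  classical
  have h : (1 + L).det
      = Matrix.detRowAlternating ((fun i => L i) + (fun i => (1 : Matrix (Fin N) (Fin N) ℝ) i)) := by
    congr 1
    ext i j
    simp [Matrix.add_apply]
    ring
  rw [h]
  have h2 := MultilinearMap.map_add_univ
    (Matrix.detRowAlternating : (Fin N → ℝ) [⋀^Fin N]→ₗ[ℝ] ℝ).toMultilinearMap
    (fun i => L i) (fun i => (1 : Matrix (Fin N) (Fin N) ℝ) i)
  rw [show (Matrix.detRowAlternating ((fun i => L i) + fun i => (1 : Matrix (Fin N) (Fin N) ℝ) i) : ℝ)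
      = (Matrix.detRowAlternating : (Fin N → ℝ) [⋀^Fin N]→ₗ[ℝ] ℝ).toMultilinearMap
        ((fun i => L i) + fun i => (1 : Matrix (Fin N) (Fin N) ℝ) i) from rfl, h2]
  exact Finset.sum_congr rfl fun s _ => (det_piecewise L s).symm

lemma subm_posDef {N : ℕ} {L : Matrix (Fin N) (Fin N) ℝ} (hL : L.PosDef)
    (J : Finset (Fin N)) : (subm L J).PosDef :=
  posdef_submatrix hL _ Subtype.coe_injective

lemma trace_all_zero {N : ℕ} {L H : Matrix (Fin N) (Fin N) ℝ} (hL : L.PosDef)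
    (hvar : varTrace L H = 0) : ∀ J : Finset (Fin N), traceRV L H J = 0 := by
  classical
  have hdet1 : 0 < (1 + L).det :=
    (Matrix.PosDef.posSemidef_add Matrix.PosSemidef.one hL).det_pos
  have ppos : ∀ J : Finset (Fin N), 0 < pstar L J := fun J =>
    div_pos (subm_posDef hL J).det_pos hdet1
  have psum : ∑ J : Finset (Fin N), pstar L J = 1 := by
    unfold pstar
    rw [← Finset.sum_div, sum_minors, div_self (ne_of_gt hdet1)]
  set p : Finset (Fin N) → ℝ := pstar L
  set t : Finset (Fin N) → ℝ := traceRV L H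
  set μ : ℝ := ∑ J : Finset (Fin N), p J * t J with hμ
  have expand : ∑ J : Finset (Fin N), p J * (t J - μ)^2
      = (∑ J : Finset (Fin N), p J * t J ^ 2) - 2*μ*(∑ J : Finset (Fin N), p J * t J)
        + μ^2 * (∑ J : Finset (Fin N), p J) := by
    have h : ∀ J, p J * (t J - μ)^2 = p J * t J ^ 2 - 2*μ*(p J * t J) + μ^2 * p J :=
      fun J => by ring
    simp_rw [h]
    rw [Finset.sum_add_distrib, Finset.sum_sub_distrib, ← Finset.mul_sum, ← Finset.mul_sum]
  have hzero : ∑ J : Finset (Fin N), p J * (t J - μ)^2 = 0 := by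
    rw [expand, psum, ← hμ]
    have : varTrace L H = (∑ J : Finset (Fin N), p J * t J ^ 2) - μ^2 := rfl
    nlinarith [hvar, this]
  have hconst : ∀ J : Finset (Fin N), t J = μ := by
    intro J
    have h0 := (Finset.sum_eq_zero_iff_of_nonneg
      (fun J _ => mul_nonneg (le_of_lt (ppos J)) (sq_nonneg _))).1 hzero J (Finset.mem_univ J)
    have := mul_eq_zero.1 h0
    rcases this with h | h
    · exact absurd h (ne_of_gt (ppos J))
    · have := pow_eq_zero_iff (n := 2) (by norm_num) |>.1 h
      linarith [sub_eq_zero.1 this]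
  have hempty : t ∅ = 0 := by
    have hE : IsEmpty {x // x ∈ (∅ : Finset (Fin N))} := ⟨fun x => (Finset.notMem_empty _ x.2)⟩
    exact Matrix.trace_eq_zero_of_isEmpty _
  intro J
  rw [hconst J, ← hconst ∅, hempty]

lemma trace_submatrix_equiv' {m n : Type*} [Fintype m] [Fintype n] [DecidableEq m]
    [DecidableEq n] (M : Matrix n n ℝ) (e : m ≃ n) :
    (M.submatrix e e).trace = M.trace := by
  simp only [Matrix.trace, Matrix.diag, Matrix.submatrix_apply]
  exact Equiv.sum_comp e fun i => M i i

lemma trace_mul_single {m : Type*} [Fintype m] [DecidableEq m] (M : Matrix m m ℝ)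
    (i j : m) (c : ℝ) : (M * Matrix.single i j c).trace = c * M j i := by
  simp [Matrix.trace, Matrix.mul_apply, Matrix.single, ite_and, Matrix.diag]
  ring

lemma traceRV_transfer {N n : ℕ} (L H : Matrix (Fin N) (Fin N) ℝ) (f : Fin n → Fin N)
    (hf : Function.Injective f) :
    traceRV L H (Finset.image f Finset.univ)
      = ((L.submatrix f f)⁻¹ * H.submatrix f f).trace := by
  classical
  set J := Finset.image f Finset.univ with hJ
  have hbij : Function.Bijective
      (fun a : Fin n => (⟨f a, by simp [hJ]⟩ : {x // x ∈ J})) := by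
    constructor
    · intro a b h
      exact hf (congrArg Subtype.val h)
    · rintro ⟨v, hv⟩
      obtain ⟨a, _, ha⟩ := Finset.mem_image.1 hv
      exact ⟨a, Subtype.ext ha⟩
  set e := Equiv.ofBijective _ hbij with he
  have hcoe : ∀ i : {x // x ∈ J}, f (e.symm i) = (i : Fin N) := fun i =>
    congrArg Subtype.val (e.apply_symm_apply i)
  have hLs : subm L J = (L.submatrix f f).submatrix e.symm e.symm := by
    ext i j
    simp only [subm, Matrix.submatrix_apply, hcoe]
  have hHs : subm H J = (H.submatrix f f).submatrix e.symm e.symm := by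
    ext i j
    simp only [subm, Matrix.submatrix_apply, hcoe]
  calc traceRV L H J = ((subm L J)⁻¹ * subm H J).trace := rfl
    _ = (((L.submatrix f f).submatrix e.symm e.symm)⁻¹
          * ((H.submatrix f f).submatrix e.symm e.symm)).trace := by rw [hLs, hHs]
    _ = (((L.submatrix f f)⁻¹).submatrix e.symm e.symm
          * ((H.submatrix f f).submatrix e.symm e.symm)).trace := by
        rw [Matrix.inv_submatrix_equiv]
    _ = (((L.submatrix f f)⁻¹ * (H.submatrix f f)).submatrix e.symm e.symm).trace := by
        rw [Matrix.submatrix_mul_equiv]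
    _ = _ := trace_submatrix_equiv' _ _

def IsWalk {N : ℕ} (L : Matrix (Fin N) (Fin N) ℝ) (n : ℕ) (i j : Fin N)
    (x : ℕ → Fin N) : Prop :=
  x 0 = i ∧ x n = j ∧ ∀ a, a < n → L (x a) (x (a+1)) ≠ 0

lemma walk_exists {N : ℕ} {L : Matrix (Fin N) (Fin N) ℝ} {i j : Fin N}
    (h : Relation.ReflTransGen (fun a b => L a b ≠ 0) i j) :
    ∃ n x, IsWalk L n i j x := by
  induction h with
  | refl => exact ⟨0, fun _ => i, rfl, rfl, fun a ha => absurd ha (Nat.not_lt_zero a)⟩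
  | @tail b c hbc hLbc ih =>
    obtain ⟨n, x, hx0, hxn, hedge⟩ := ih
    refine ⟨n+1, fun a => if a ≤ n then x a else c, by simp [hx0], by simp, ?_⟩
    intro a ha
    by_cases h1 : a < n
    · have h2 : a ≤ n := le_of_lt h1
      have h3 : a + 1 ≤ n := h1
      simpa [h2, h3] using hedge a h1
    · have h2 : a = n := by omega
      subst h2
      simp only [le_refl, if_pos, Nat.not_succ_le_self, if_neg, hxn]
      simpa [hxn] using hLbc

lemma walk_sub {N : ℕ} {L : Matrix (Fin N) (Fin N) ℝ} {n : ℕ} {i j : Fin N} {x : ℕ → Fin N}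
    (hx : IsWalk L n i j x) (a b : ℕ) (hab : a ≤ b) (hbn : b ≤ n) :
    IsWalk L (b - a) (x a) (x b) (fun c => x (a + c)) := by
  refine ⟨by simp, by simp [Nat.add_sub_cancel' hab], ?_⟩
  intro c hc
  have : a + c < n := by omega
  have h := hx.2.2 (a + c) this
  simpa [Nat.add_assoc] using h

lemma walk_concat {N : ℕ} {L : Matrix (Fin N) (Fin N) ℝ} {m m' : ℕ} {i k j : Fin N}
    {y z : ℕ → Fin N} (hy : IsWalk L m i k y) (hz : IsWalk L m' k j z) :
    IsWalk L (m + m') i j (fun c => if c ≤ m then y c else z (c - m)) := by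
  obtain ⟨hy0, hym, hye⟩ := hy
  obtain ⟨hz0, hzm, hze⟩ := hz
  refine ⟨by simp [hy0], ?_, ?_⟩
  · by_cases h : m' = 0
    · subst h
      show (if m + 0 ≤ m then y (m + 0) else z (m + 0 - m)) = j
      simp only [Nat.add_zero, le_refl, if_pos]
      rw [hym, ← hz0, hzm]
    · have h1 : ¬ m + m' ≤ m := by omega
      simp only [if_neg h1, Nat.add_sub_cancel_left, hzm]
  · intro a ha
    by_cases h1 : a + 1 ≤ m
    · have h2 : a ≤ m := by omega
      simp only [if_pos h1, if_pos h2]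
      exact hye a (by omega)
    · by_cases h2 : a ≤ m
      · have h3 : a = m := by omega
        subst h3
        simp only [if_pos le_rfl, if_neg h1, Nat.add_sub_cancel_left, hym, ← hz0]
        exact hze 0 (by omega)
      · simp only [if_neg h1, if_neg h2]
        have h4 : a + 1 - m = (a - m) + 1 := by omega
        rw [h4]
        exact hze (a - m) (by omega)

lemma walk_single {N : ℕ} {L : Matrix (Fin N) (Fin N) ℝ} {u v : Fin N} (h : L u v ≠ 0) :
    IsWalk L 1 u v (fun c => if c = 0 then u else v) := by
  refine ⟨rfl, rfl, ?_⟩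
  intro a ha
  have : a = 0 := by omega
  subst this
  simpa using h

lemma inv_corner_ne_zero {n : ℕ} (A : Matrix (Fin (n+1)) (Fin (n+1)) ℝ)
    (hA : A.PosDef)
    (htri : ∀ a b : Fin (n+1), (a : ℕ) + 2 ≤ (b : ℕ) → A a b = 0)
    (hsup : ∀ a : Fin n, A a.castSucc a.succ ≠ 0) :
    A⁻¹ 0 (Fin.last n) ≠ 0 := by
  classical
  have hdet : A.det ≠ 0 := ne_of_gt hA.det_pos
  -- the minor
  set M' : Matrix (Fin n) (Fin n) ℝ := A.submatrix Fin.castSucc Fin.succ with hM'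
  have htriangular : M'.BlockTriangular OrderDual.toDual := by
    intro a b hab
    have : (a : ℕ) < (b : ℕ) := hab
    exact htri _ _ (by simp [Fin.coe_castSucc, Fin.val_succ]; omega)
  have hdetM' : M'.det = ∏ a : Fin n, A a.castSucc a.succ :=
    Matrix.det_of_lowerTriangular M' htriangular
  have hM'ne : M'.det ≠ 0 := by
    rw [hdetM']
    exact Finset.prod_ne_zero_iff.2 fun a _ => hsup a
  -- adjugate entry
  have hadj : A.adjugate 0 (Fin.last n) = (-1) ^ n * M'.det := by
    rw [Matrix.adjugate_apply]
    rw [Matrix.det_succ_row _ (Fin.last n)]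
    rw [Finset.sum_eq_single (0 : Fin (n+1))]
    · have h2 : (A.updateRow (Fin.last n) (Pi.single 0 1)).submatrix
          (Fin.last n).succAbove (0 : Fin (n+1)).succAbove = M' := by
        ext a b
        rw [Fin.succAbove_last, Fin.succAbove_zero]
        simp only [submatrix_apply]
        rw [Matrix.updateRow_ne (Fin.ne_last_of_lt (Fin.castSucc_lt_last a))]
        rfl
      rw [Matrix.updateRow_self, h2]
      simp [Fin.val_last]
    · intro j _ hj
      rw [Matrix.updateRow_self]
      rw [Pi.single_eq_of_ne hj]
      ring
    · intro h; exact absurd (Finset.mem_univ _) h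
  have : A⁻¹ 0 (Fin.last n) = Ring.inverse A.det * ((-1) ^ n * M'.det) := by
    rw [Matrix.inv_def, Matrix.smul_apply, hadj, smul_eq_mul]
  rw [this, Ring.inverse_eq_inv']
  exact mul_ne_zero (inv_ne_zero hdet) (mul_ne_zero (pow_ne_zero _ (by norm_num)) hM'ne)

lemma no_shortcut_eq {N : ℕ} {L : Matrix (Fin N) (Fin N) ℝ} {n : ℕ} {i j : Fin N}
    {x : ℕ → Fin N} (hx : IsWalk L n i j x)
    (hmin : ∀ m, m < n → ∀ y, ¬ IsWalk L m i j y)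
    {a b : ℕ} (hab : a < b) (hbn : b ≤ n) (heq : x a = x b) : False := by
  have w1 := walk_sub hx 0 a (Nat.zero_le a) (by omega)
  have w2 := walk_sub hx b n hbn le_rfl
  rw [hx.1] at w1
  rw [heq] at w1
  have w := walk_concat w1 w2
  rw [hx.2.1] at w
  exact hmin _ (by omega) _ w

lemma no_shortcut_edge {N : ℕ} {L : Matrix (Fin N) (Fin N) ℝ} {n : ℕ} {i j : Fin N}
    {x : ℕ → Fin N} (hx : IsWalk L n i j x)
    (hmin : ∀ m, m < n → ∀ y, ¬ IsWalk L m i j y)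
    {a b : ℕ} (hab : a + 2 ≤ b) (hbn : b ≤ n) (hedge : L (x a) (x b) ≠ 0) : False := by
  have w1 := walk_sub hx 0 a (Nat.zero_le a) (by omega)
  rw [hx.1] at w1
  have wm := walk_single hedge
  have w2 := walk_sub hx b n hbn le_rfl
  have w := walk_concat (walk_concat w1 wm) w2
  rw [hx.2.1] at w
  exact hmin _ (by omega) _ w

lemma H_entry_zero {N : ℕ} (L H : Matrix (Fin N) (Fin N) ℝ) (hL : L.PosDef)
    (hH : H.IsSymm) (ht : ∀ J, traceRV L H J = 0) :
    ∀ n : ℕ, ∀ i j : Fin N, (∃ x, IsWalk L n i j x) →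
      (∀ m, m < n → ∀ y, ¬ IsWalk L m i j y) → H i j = 0 := by
  classical
  intro n
  induction n using Nat.strong_induction_on with
  | _ n IH =>
  intro i j hex hmin
  obtain ⟨x, hx⟩ := hex
  cases n with
  | zero =>
    have hij : i = j := by rw [← hx.1, ← hx.2.1]
    set f : Fin 1 → Fin N := fun a => x (a : ℕ) with hf
    have hinj : Function.Injective f := fun a b _ => Subsingleton.elim a b
    set A : Matrix (Fin 1) (Fin 1) ℝ := L.submatrix f f with hA
    set B : Matrix (Fin 1) (Fin 1) ℝ := H.submatrix f f with hB
    have hApd : A.PosDef := posdef_submatrix hL f hinj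
    have htr : (A⁻¹ * B).trace = 0 := by
      rw [hA, hB, ← traceRV_transfer L H f hinj]; exact ht _
    have h1 : (A⁻¹ * B).trace = A⁻¹ 0 0 * B 0 0 := by
      rw [Matrix.trace_fin_one, Matrix.mul_apply, Fin.sum_univ_one]
    have h2 : A⁻¹ 0 0 ≠ 0 := by
      rw [Matrix.inv_def, Matrix.adjugate_fin_one, Matrix.smul_apply, Matrix.one_apply_eq,
        smul_eq_mul, mul_one, Ring.inverse_eq_inv']
      exact inv_ne_zero (ne_of_gt hApd.det_pos)
    have h3 : B 0 0 = H i j := by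
      show H (f 0) (f 0) = H i j
      have h4 : f 0 = i := hx.1
      rw [h4, hij]
    rw [h1, h3] at htr
    exact (mul_eq_zero.1 htr).resolve_left h2
  | succ n' =>
    set f : Fin (n'+2) → Fin N := fun a => x (a : ℕ) with hf
    have hinj : Function.Injective f := by
      intro a b hab
      by_contra hne
      rcases lt_trichotomy (a : ℕ) (b : ℕ) with h | h | h
      · exact no_shortcut_eq hx hmin h (Nat.lt_succ_iff.1 b.isLt) hab
      · exact hne (Fin.ext h)
      · exact no_shortcut_eq hx hmin h (Nat.lt_succ_iff.1 a.isLt) hab.symm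
    set A : Matrix (Fin (n'+2)) (Fin (n'+2)) ℝ := L.submatrix f f with hA
    set B : Matrix (Fin (n'+2)) (Fin (n'+2)) ℝ := H.submatrix f f with hB
    have hApd : A.PosDef := posdef_submatrix hL f hinj
    have htr : (A⁻¹ * B).trace = 0 := by
      rw [hA, hB, ← traceRV_transfer L H f hinj]; exact ht _
    set lst : Fin (n'+2) := Fin.last (n'+1) with hlst
    have hlstv : (lst : ℕ) = n'+1 := rfl
    have htri : ∀ a b : Fin (n'+2), (a : ℕ) + 2 ≤ (b : ℕ) → A a b = 0 := by
      intro a b h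
      by_contra hAab
      exact no_shortcut_edge hx hmin h (Nat.lt_succ_iff.1 b.isLt) hAab
    have hsup : ∀ a : Fin (n'+1), A a.castSucc a.succ ≠ 0 := by
      intro a
      have h5 := hx.2.2 (a : ℕ) a.isLt
      simpa [hA, hf, Fin.coe_castSucc, Fin.val_succ] using h5
    have hcorner := inv_corner_ne_zero A hApd htri hsup
    have hsmall : ∀ a b : Fin (n'+2), (a : ℕ) ≤ (b : ℕ) → (b : ℕ) - (a : ℕ) < n'+1 →
        H (f a) (f b) = 0 := by
      intro a b hab hd
      have w := walk_sub hx a b hab (Nat.lt_succ_iff.1 b.isLt)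
      have hexP : ∃ m, ∃ y, IsWalk L m (f a) (f b) y := ⟨_, _, w⟩
      have hm0 : Nat.find hexP ≤ (b : ℕ) - (a : ℕ) := Nat.find_le ⟨_, w⟩
      refine IH (Nat.find hexP) (by omega) (f a) (f b) (Nat.find_spec hexP) ?_
      intro m hm y hy
      exact Nat.find_min hexP hm ⟨y, hy⟩
    have hBzero : ∀ a b : Fin (n'+2), ¬(a = 0 ∧ b = lst) → ¬(a = lst ∧ b = 0) →
        B a b = 0 := by
      intro a b h1 h2
      show H (f a) (f b) = 0
      rcases le_or_gt (a : ℕ) (b : ℕ) with h | h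
      · refine hsmall a b h ?_
        have hb : (b : ℕ) ≤ n'+1 := Nat.lt_succ_iff.1 b.isLt
        rcases Nat.lt_or_ge ((b:ℕ) - (a:ℕ)) (n'+1) with h3 | h3
        · exact h3
        · exact absurd ⟨Fin.ext (by simp only [Fin.val_zero]; omega), Fin.ext (by rw [hlstv]; omega)⟩ h1
      · rw [← hH.apply]
        refine hsmall b a (le_of_lt h) ?_
        have ha : (a : ℕ) ≤ n'+1 := Nat.lt_succ_iff.1 a.isLt
        rcases Nat.lt_or_ge ((a:ℕ) - (b:ℕ)) (n'+1) with h3 | h3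
        · exact h3
        · exact absurd ⟨Fin.ext (by rw [hlstv]; omega), Fin.ext (by simp only [Fin.val_zero]; omega)⟩ h2
    have hf0 : f 0 = i := hx.1
    have hflst : f lst = j := hx.2.1
    have hBlst : B 0 lst = H i j := by
      show H (f 0) (f lst) = H i j
      rw [hf0, hflst]
    have hBlst' : B lst 0 = H i j := by
      show H (f lst) (f 0) = H i j
      rw [hf0, hflst, hH.apply]
    have hne : (0 : Fin (n'+2)) ≠ lst := by
      intro hc
      have := congrArg Fin.val hc
      rw [hlstv] at this
      simp at this
    have hBrep : B = Matrix.single (0 : Fin (n'+2)) lst (H i j)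
        + Matrix.single lst (0 : Fin (n'+2)) (H i j) := by
      ext a b
      by_cases h1 : a = 0 ∧ b = lst
      · obtain ⟨rfl, rfl⟩ := h1
        simp [Matrix.single, hBlst, hne, hne.symm]
      · by_cases h2 : a = lst ∧ b = 0
        · obtain ⟨rfl, rfl⟩ := h2
          simp [Matrix.single, hBlst', hne, hne.symm]
        · rw [hBzero a b h1 h2]
          simp only [Matrix.add_apply, Matrix.single, Matrix.of_apply]
          have l1 : ¬((0 : Fin (n'+2)) = a ∧ lst = b) := fun ⟨u, v⟩ => h1 ⟨u.symm, v.symm⟩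
          have l2 : ¬(lst = a ∧ (0 : Fin (n'+2)) = b) := fun ⟨u, v⟩ => h2 ⟨u.symm, v.symm⟩
          simp [if_neg l1, if_neg l2]
    have hsymInv : A⁻¹ lst 0 = A⁻¹ 0 lst := by
      have h6 := hApd.inv.isHermitian.apply 0 lst
      simpa using h6
    rw [hBrep, Matrix.mul_add, Matrix.trace_add, _root_.trace_mul_single, _root_.trace_mul_single,
      hsymInv] at htr
    have h7 : H i j * (2 * A⁻¹ 0 lst) = 0 := by linarith
    rcases mul_eq_zero.1 h7 with h | h
    · exact h
    · exact absurd (by linarith : A⁻¹ 0 lst = 0) hcorner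

/-- If `L*` is irreducible (its determinantal graph is connected), then the quadratic
form `H ↦ Var[Tr((L*_Z)⁻¹ H_Z)]` vanishes only at `H = 0`. -/
theorem variance_form_positive_definite {N : ℕ}
    (Lstar : Matrix (Fin N) (Fin N) ℝ) (hL : Lstar.PosDef)
    (hconn : ∀ i j : Fin N, Relation.ReflTransGen (fun a b => Lstar a b ≠ 0) i j) :
    ∀ H : Matrix (Fin N) (Fin N) ℝ, H.IsSymm →
      varTrace Lstar H = 0 → H = 0 := by
  classical
  intro H hH hvar
  have ht := trace_all_zero hL hvar
  ext i j
  show H i j = (0 : Matrix (Fin N) (Fin N) ℝ) i j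
  rw [Matrix.zero_apply]
  have hex : ∃ n, ∃ y, IsWalk Lstar n i j y := walk_exists (hconn i j)
  exact H_entry_zero Lstar H hL hH ht (Nat.find hex) i j (Nat.find_spec hex)
    (fun m hm y hy => Nat.find_min hex hm ⟨y, hy⟩)
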